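/- arXiv:0902.4589 — 2 statements merged into one kernel-verified Lean document; each statement's English description precedes it below -/
import Mathlib

section
/- Let m ≥ 4 be an integer. For every c ∈ (0,1) there is a unique θ ∈ (2π/m, 2π/(m−1)) such that c = r_θ^{m−1}·sin(mθ)/sin θ, where r_θ denotes the unique positive real root of the polynomial g_θ(t) = (sin((m−1)θ)/sin θ)·t^m − (sin(mθ)/sin θ)·t^{m−1} + 1. For m = 3 the same uniqueness statement holds for every c ∈ (0, 3/4). -/
/-!
For `θ ∈ (2π/m, 2π/(m-1))` we have `sin θ > 0`, `sin mθ > 0` and `sin (m-1)θ < 0`, so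
`g_θ t = A t^m - B t^(m-1) + 1` with `A = sin (m-1)θ / sin θ < 0 < B = sin mθ / sin θ`;
it is strictly decreasing on `[0, ∞)`, whence its positive root is unique. Eliminating `r` from `g_θ r = 0` and `c = r^(m-1) B` forces
`r = (1-c) B / (c (-A))` and leaves the condition `c^m (-A)^(m-1) = (1-c)^(m-1) B^m`, i.e.
`m log B - (m-1) log (-A) = m log c - (m-1) log (1-c)`.

The left side is strictly increasing in `θ`: its derivative
`m² cot mθ - cot θ - (m-1)² cot (m-1)θ` times `sin mθ · sin (m-1)θ · sin θ < 0` is minus a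
sum of two squares. This gives uniqueness.
Existence is the intermediate value theorem: at `θ = 2π/m` we have `B = 0`, `-A = 1`; at
`θ = 2π/(m-1)` we have `A = 0`, `B = 1` if `m ≥ 4`, whereas for `m = 3` this endpoint is `π`,
where `B → 3` and `-A → 2`, and the sign condition `27 (1-c)² > 4 c³` is exactly `c < 3/4`.
-/

open Real

noncomputable section

/-- The polynomial `g_θ(t) = (sin((m-1)θ)/sin θ)·t^m - (sin(mθ)/sin θ)·t^{m-1} + 1`. -/
def gpoly (m : ℕ) (θ t : ℝ) : ℝ :=
  (Real.sin (((m : ℝ) - 1) * θ) / Real.sin θ) * t ^ m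
    - (Real.sin ((m : ℝ) * θ) / Real.sin θ) * t ^ (m - 1) + 1

section Trinomial

variable {m : ℕ} {A B c : ℝ}

lemma strictAntiOn_trinomial (hm : 2 ≤ m) (hA : A ≤ 0) (hB : 0 < B) :
    StrictAntiOn (fun t : ℝ => A * t ^ m - B * t ^ (m - 1) + 1) (Set.Ici 0) := by
  intro x hx y _ hxy
  have hpow : x ^ m ≤ y ^ m := pow_le_pow_left₀ hx hxy.le m
  have hpow1 : x ^ (m - 1) < y ^ (m - 1) := pow_lt_pow_left₀ hxy hx (by omega)
  linarith [mul_le_mul_of_nonpos_left hpow hA, mul_lt_mul_of_pos_left hpow1 hB]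

lemma exists_trinomial_root_iff (hm : 1 ≤ m) (hA : A < 0) (hB : 0 < B) (hc : 0 < c)
    (hc1 : c < 1) :
    (∃ r, 0 < r ∧ A * r ^ m - B * r ^ (m - 1) + 1 = 0 ∧ c = r ^ (m - 1) * B) ↔
      c ^ m * (-A) ^ (m - 1) = (1 - c) ^ (m - 1) * B ^ m := by
  obtain ⟨k, rfl⟩ : ∃ k, m = k + 1 := ⟨m - 1, by omega⟩
  simp only [Nat.add_sub_cancel]
  constructor
  · rintro ⟨r, -, hroot, rfl⟩
    have h : 1 - r ^ k * B = -A * r * r ^ k := by linear_combination hroot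
    rw [h]
    ring
  · intro h
    -- `r` is forced by `c = r ^ k * B` and `r ^ k * (A * r - B) = -1`
    set r := (1 - c) * B / (c * -A) with hr
    have hcA : 0 < c * -A := mul_pos hc (neg_pos.mpr hA)
    have hrk : r ^ k * B = c := by
      rw [hr, div_pow, div_mul_eq_mul_div, div_eq_iff (pow_pos hcA k).ne', mul_pow, mul_pow]
      linear_combination -h
    refine ⟨r, by rw [hr]; exact div_pos (mul_pos (by linarith) hB) hcA, ?_, hrk.symm⟩
    have hAr : c * (A * r) = -(1 - c) * B := by
      rw [hr]; field_simp [hA.ne]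
    have hroot : c * (A * r ^ (k + 1) - B * r ^ k + 1) = 0 := by
      linear_combination r ^ k * hAr - hrk
    exact (mul_eq_zero.1 hroot).resolve_left hc.ne'

end Trinomial

abbrev sector (m : ℕ) : Set ℝ := Set.Ioo (2 * π / (m : ℝ)) (2 * π / ((m : ℝ) - 1))

def topCoeff (m : ℕ) (θ : ℝ) : ℝ := sin (((m : ℝ) - 1) * θ) / sin θ

def nextCoeff (m : ℕ) (θ : ℝ) : ℝ := sin ((m : ℝ) * θ) / sin θ

section Sector

variable {m : ℕ} {θ c : ℝ}

lemma sin_signs_of_mem_sector (hm : 3 ≤ m)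
    (hθ : θ ∈ sector m) :
    0 < sin θ ∧ 0 < sin ((m : ℝ) * θ) ∧ sin (((m : ℝ) - 1) * θ) < 0 := by
  obtain ⟨h1, h2⟩ := hθ
  have hm3 : (3 : ℝ) ≤ m := by exact_mod_cast hm
  have hmθ : 2 * π < m * θ := by rw [div_lt_iff₀ (by linarith)] at h1; linarith
  have hm1θ : (m - 1) * θ < 2 * π := by rw [lt_div_iff₀ (by linarith)] at h2; linarith
  have hθ0 : 0 < θ := by nlinarith [pi_pos]
  refine ⟨sin_pos_of_pos_of_lt_pi hθ0 (by nlinarith), ?_, ?_⟩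
  · rw [← sin_sub_two_pi]
    exact sin_pos_of_pos_of_lt_pi (by linarith) (by nlinarith)
  · rw [← neg_pos, ← sin_two_pi_sub]
    exact sin_pos_of_pos_of_lt_pi (by linarith) (by nlinarith)

lemma topCoeff_neg (hm : 3 ≤ m) (hθ : θ ∈ sector m) :
    topCoeff m θ < 0 :=
  have ⟨h1, _, h'⟩ := sin_signs_of_mem_sector hm hθ
  div_neg_of_neg_of_pos h' h1

lemma nextCoeff_pos (hm : 3 ≤ m) (hθ : θ ∈ sector m) :
    0 < nextCoeff m θ :=
  have ⟨h1, hm, _⟩ := sin_signs_of_mem_sector hm hθ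
  div_pos hm h1

lemma gpoly_strictAntiOn (hm : 3 ≤ m)
    (hθ : θ ∈ sector m) :
    StrictAntiOn (gpoly m θ) (Set.Ici 0) :=
  strictAntiOn_trinomial (by omega) (topCoeff_neg hm hθ).le (nextCoeff_pos hm hθ)

lemma exists_gpoly_root_iff (hm : 3 ≤ m)
    (hθ : θ ∈ sector m) (hc : c ∈ Set.Ioo (0 : ℝ) 1) :
    (∃ r, 0 < r ∧ gpoly m θ r = 0 ∧ c = r ^ (m - 1) * sin ((m : ℝ) * θ) / sin θ) ↔
      c ^ m * (-topCoeff m θ) ^ (m - 1) = (1 - c) ^ (m - 1) * nextCoeff m θ ^ m := by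
  simp only [mul_div_assoc]
  exact exists_trinomial_root_iff (by omega) (topCoeff_neg hm hθ) (nextCoeff_pos hm hθ) hc.1 hc.2

end Sector

lemma sq_mul_cot_sub_cot_sub_sq_mul_cot_pos (a u v : ℝ) (h : sin u * sin v * sin (u - v) < 0) :
    0 < a ^ 2 * cot u - cot (u - v) - (a - 1) ^ 2 * cot v := by
  have hu : sin u ≠ 0 := by rintro h0; simp [h0] at h
  have hv : sin v ≠ 0 := by rintro h0; simp [h0] at h
  have huv : sin (u - v) ≠ 0 := by rintro h0; simp [h0] at h
  have key : (a ^ 2 * cot u - cot (u - v) - (a - 1) ^ 2 * cot v) * (sin u * sin v * sin (u - v))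
      = -((a * cos u * sin v - (a - 1) * cos v * sin u) ^ 2 + (sin u * sin v) ^ 2) := by
    simp only [cot_eq_cos_div_sin]
    field_simp
    rw [sin_sub, cos_sub]
    ring
  have hsq : 0 < (a * cos u * sin v - (a - 1) * cos v * sin u) ^ 2 + (sin u * sin v) ^ 2 := by
    positivity
  nlinarith

def logSinQuotient (m : ℕ) (θ : ℝ) : ℝ :=
  m * log (sin (m * θ)) - log (sin θ) - (m - 1) * log (-sin ((m - 1) * θ))

section Uniqueness

variable {m : ℕ} {θ c : ℝ}

lemma hasDerivAt_logSinQuotient (hs1 : sin θ ≠ 0) (hsm : sin (m * θ) ≠ 0)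
    (hsm1 : sin ((m - 1) * θ) ≠ 0) :
    HasDerivAt (logSinQuotient m)
      (m ^ 2 * cot (m * θ) - cot θ - (m - 1) ^ 2 * cot ((m - 1) * θ)) θ := by
  have hlin : ∀ a : ℝ, HasDerivAt (fun x => a * x) a θ := fun a => by
    simpa using (hasDerivAt_id θ).const_mul a
  have hsin : ∀ a : ℝ, HasDerivAt (fun x => sin (a * x)) (cos (a * θ) * a) θ := fun a =>
    (hasDerivAt_sin (a * θ)).comp θ (hlin a)
  have hm := ((hsin m).log hsm).const_mul (m : ℝ)
  have h1 := (hasDerivAt_sin θ).log hs1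
  have hm1 := (((hsin (m - 1)).neg).log (neg_ne_zero.mpr hsm1)).const_mul ((m : ℝ) - 1)
  refine ((hm.sub h1).sub hm1).congr_deriv ?_
  simp only [Pi.neg_apply, neg_div_neg_eq, cot_eq_cos_div_sin]
  ring

lemma logSinQuotient_strictMonoOn (hm : 3 ≤ m) :
    StrictMonoOn (logSinQuotient m) (sector m) := by
  have hderiv : ∀ θ ∈ sector m,
      HasDerivAt (logSinQuotient m)
        (m ^ 2 * cot (m * θ) - cot θ - (m - 1) ^ 2 * cot ((m - 1) * θ)) θ := fun θ hθ =>
    have ⟨hs1, hsm, hsm1⟩ := sin_signs_of_mem_sector hm hθ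
    hasDerivAt_logSinQuotient hs1.ne' hsm.ne' hsm1.ne
  refine strictMonoOn_of_deriv_pos (convex_Ioo _ _)
    (fun θ hθ => (hderiv θ hθ).continuousAt.continuousWithinAt) fun θ hθ => ?_
  rw [interior_Ioo] at hθ
  obtain ⟨hs1, hsm, hsm1⟩ := sin_signs_of_mem_sector hm hθ
  have hsub : (m : ℝ) * θ - (m - 1) * θ = θ := by ring
  rw [(hderiv θ hθ).deriv]
  simpa only [hsub] using sq_mul_cot_sub_cot_sub_sq_mul_cot_pos m (m * θ) ((m - 1) * θ)
    (by rw [hsub]; exact mul_neg_of_neg_of_pos (mul_neg_of_pos_of_neg hsm hsm1) hs1)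

lemma logSinQuotient_eq_of_mem_sector (hm : 3 ≤ m)
    (hθ : θ ∈ sector m) (hc : c ∈ Set.Ioo (0 : ℝ) 1)
    (h : c ^ m * (-topCoeff m θ) ^ (m - 1) = (1 - c) ^ (m - 1) * nextCoeff m θ ^ m) :
    logSinQuotient m θ = m * log c - (m - 1) * log (1 - c) := by
  obtain ⟨hs1, hsm, hsm1⟩ := sin_signs_of_mem_sector hm hθ
  have hA : log (-topCoeff m θ) = log (-sin ((m - 1) * θ)) - log (sin θ) := by
    rw [topCoeff, ← neg_div, log_div (neg_pos.mpr hsm1).ne' hs1.ne']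
  have hB : log (nextCoeff m θ) = log (sin (m * θ)) - log (sin θ) := log_div hsm.ne' hs1.ne'
  have hA0 : 0 < -topCoeff m θ := neg_pos.mpr (topCoeff_neg hm hθ)
  have hc1 : 0 < 1 - c := sub_pos.mpr hc.2
  have hlog := congrArg log h
  rw [log_mul (pow_pos hc.1 _).ne' (pow_pos hA0 _).ne',
    log_mul (pow_pos hc1 _).ne' (pow_pos (nextCoeff_pos hm hθ) _).ne',
    log_pow, log_pow, log_pow, log_pow, hA, hB, Nat.cast_pred (by omega)] at hlog
  rw [logSinQuotient]
  linear_combination -hlog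

end Uniqueness

section Existence

variable {m : ℕ} {θ c : ℝ}

lemma exists_mem_sector_of_four_le (hm : 4 ≤ m) (hc : c ∈ Set.Ioo (0 : ℝ) 1) :
    ∃ θ ∈ sector m,
      c ^ m * (-topCoeff m θ) ^ (m - 1) = (1 - c) ^ (m - 1) * nextCoeff m θ ^ m := by
  have hm4 : (4 : ℝ) ≤ m := by exact_mod_cast hm
  have hm1 : (m : ℝ) - 1 ≠ 0 := by linarith
  set a := 2 * π / (m : ℝ) with ha
  set b := 2 * π / ((m : ℝ) - 1) with hb
  have hab : a < b := div_lt_div_of_pos_left (by positivity) (by linarith) (by linarith)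
  have ha0 : 0 < a := by positivity
  have hbπ : b < π := by rw [hb, div_lt_iff₀ (by linarith)]; nlinarith [pi_pos]
  have hsin : ∀ θ ∈ Set.Icc a b, sin θ ≠ 0 := fun θ hθ =>
    (sin_pos_of_pos_of_lt_pi (ha0.trans_le hθ.1) (hθ.2.trans_lt hbπ)).ne'
  set f : ℝ → ℝ := fun θ =>
    (1 - c) ^ (m - 1) * nextCoeff m θ ^ m - c ^ m * (-topCoeff m θ) ^ (m - 1)
  have hf : ContinuousOn f (Set.Icc a b) := by
    unfold f topCoeff nextCoeff
    fun_prop (disch := assumption)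
  have hfa : f a = -c ^ m := by
    have hma : (m : ℝ) * a = 2 * π := by rw [ha]; field_simp
    have hm1a : ((m : ℝ) - 1) * a = 2 * π - a := by rw [ha]; field_simp
    simp only [f, topCoeff, nextCoeff, hma, hm1a, sin_two_pi, sin_two_pi_sub, zero_div,
      zero_pow (by omega : m ≠ 0), neg_div, div_self (hsin a ⟨le_rfl, hab.le⟩), neg_neg,
      one_pow]
    ring
  have hfb : f b = (1 - c) ^ (m - 1) := by
    have hmb : (m : ℝ) * b = b + 2 * π := by rw [hb]; field_simp; ring
    have hm1b : ((m : ℝ) - 1) * b = 2 * π := by rw [hb]; field_simp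
    simp only [f, topCoeff, nextCoeff, hmb, hm1b, sin_add_two_pi, sin_two_pi, zero_div, neg_zero,
      zero_pow (by omega : m - 1 ≠ 0), div_self (hsin b ⟨hab.le, le_rfl⟩), one_pow]
    ring
  obtain ⟨θ, hθ, hfθ⟩ := intermediate_value_Ioo hab.le hf
    ⟨by rw [hfa]; exact neg_neg_of_pos (pow_pos hc.1 m),
     by rw [hfb]; exact pow_pos (sub_pos.mpr hc.2) _⟩
  exact ⟨θ, hθ, by linear_combination -hfθ⟩

lemma topCoeff_three (h : sin θ ≠ 0) : topCoeff 3 θ = 2 * cos θ := by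
  rw [topCoeff, show ((3 : ℕ) : ℝ) - 1 = 2 by norm_num, sin_two_mul]
  field_simp

lemma nextCoeff_three (h : sin θ ≠ 0) : nextCoeff 3 θ = 3 - 4 * sin θ ^ 2 := by
  rw [nextCoeff, Nat.cast_ofNat, sin_three_mul]
  field_simp

lemma exists_mem_sector_three (hc : 0 < c) (hc3 : c < 3 / 4) :
    ∃ θ ∈ sector 3,
      c ^ 3 * (-topCoeff 3 θ) ^ (3 - 1) = (1 - c) ^ (3 - 1) * nextCoeff 3 θ ^ 3 := by
  have hI : sector 3 = Set.Ioo (2 * π / 3) π := by norm_num [sector]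
  set f : ℝ → ℝ := fun θ => (1 - c) ^ 2 * (3 - 4 * sin θ ^ 2) ^ 3 - c ^ 3 * (2 * cos θ) ^ 2
  have hf : ContinuousOn f (Set.Icc (2 * π / 3) π) := by fun_prop
  have hfa : f (2 * π / 3) = -c ^ 3 := by
    have hcos : cos (2 * π / 3) = -(1 / 2) := by
      rw [show 2 * π / 3 = π - π / 3 by ring, cos_pi_sub, cos_pi_div_three]
    have hsin : sin (2 * π / 3) ^ 2 = 3 / 4 := by
      rw [sin_sq, hcos]; norm_num
    simp only [f, hsin, hcos]; ring
  have hfb : f π = (3 - 4 * c) * (3 - c) ^ 2 := by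
    simp only [f, sin_pi, cos_pi]; ring
  obtain ⟨θ, hθ, hfθ⟩ := intermediate_value_Ioo (by linarith [pi_pos]) hf
    ⟨by rw [hfa]; exact neg_neg_of_pos (pow_pos hc 3),
     by rw [hfb]; exact mul_pos (by linarith) (pow_pos (by linarith) 2)⟩
  have hsin : sin θ ≠ 0 := (sin_pos_of_pos_of_lt_pi (by linarith [hθ.1, pi_pos]) hθ.2).ne'
  refine ⟨θ, hI ▸ hθ, ?_⟩
  rw [topCoeff_three hsin, nextCoeff_three hsin]
  linear_combination -hfθ

lemma exists_mem_sector_coeff_eq (hm : 3 ≤ m) (hc : c ∈ Set.Ioo (0 : ℝ) 1)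
    (hc3 : m = 3 → c < 3 / 4) :
    ∃ θ ∈ sector m,
      c ^ m * (-topCoeff m θ) ^ (m - 1) = (1 - c) ^ (m - 1) * nextCoeff m θ ^ m := by
  rcases hm.eq_or_lt with rfl | hm4
  · exact exists_mem_sector_three hc.1 (hc3 rfl)
  · exact exists_mem_sector_of_four_le hm4 hc

end Existence

/-- For `m ≥ 4` and every `c ∈ (0,1)` (resp. `m = 3` and every `c ∈ (0,3/4)`) there is a
unique `θ ∈ (2π/m, 2π/(m-1))` such that `c = r_θ^{m-1}·sin(mθ)/sin θ`, where `r_θ` is the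
unique positive real root of `g_θ`. -/
theorem stmt_11 (m : ℕ) (hm : 3 ≤ m) (c : ℝ) (hc : c ∈ Set.Ioo (0 : ℝ) 1)
    (hc3 : m = 3 → c < 3 / 4) :
    ∃! θ : ℝ, θ ∈ Set.Ioo (2 * π / (m : ℝ)) (2 * π / ((m : ℝ) - 1)) ∧
      ∃ r : ℝ, 0 < r ∧ gpoly m θ r = 0 ∧ (∀ s : ℝ, 0 < s → gpoly m θ s = 0 → s = r) ∧
        c = r ^ (m - 1) * Real.sin ((m : ℝ) * θ) / Real.sin θ := by
  obtain ⟨θ, hθ, hcoeff⟩ := exists_mem_sector_coeff_eq hm hc hc3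
  obtain ⟨r, hr, hroot, hcr⟩ := (exists_gpoly_root_iff hm hθ hc).2 hcoeff
  refine ⟨θ, ⟨hθ, r, hr, hroot, fun s hs hroot' => ?_, hcr⟩, ?_⟩
  · exact (gpoly_strictAntiOn hm hθ).injOn hs.le hr.le (hroot'.trans hroot.symm)
  · rintro θ' ⟨hθ', r', hr', hroot', -, hcr'⟩
    have hcoeff' := (exists_gpoly_root_iff hm hθ' hc).1 ⟨r', hr', hroot', hcr'⟩
    exact (logSinQuotient_strictMonoOn hm).injOn hθ' hθ <| by
      rw [logSinQuotient_eq_of_mem_sector hm hθ' hc hcoeff',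
        logSinQuotient_eq_of_mem_sector hm hθ hc hcoeff]
end
end

section
/- Let m ≥ 2 be an integer and let S be a nonempty proper subset of the set of all m-th roots of unity in ℂ, with n = |S|, and let S^c denote the complement of S in the set of m-th roots of unity. Then for every j with 1 ≤ j ≤ m − n, h_j(S) = (−1)^j · σ_j(S^c), where h_j(S) is the j-th complete homogeneous symmetric polynomial evaluated at the elements of S and σ_j(S^c) is the j-th elementary symmetric function of the elements of S^c. -/
/-!
Write `E_T(X) = ∏_{z ∈ T} (1 - zX)`, whose `j`-th coefficient is `(-1)^j σ_j(T)`, and note that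
`1 / E_S(X) = ∏_{z ∈ S} 1 / (1 - zX)` has `j`-th coefficient `h_j(S)`. If `U` is the set of all
`m`-th roots of unity then `E_U(X) = 1 - X^m`, so `E_{U \ S}(X) = (1 - X^m) / E_S(X)`, and the two
sides agree in every degree `j < m`.
-/

noncomputable section

/-- The `k`-th complete homogeneous symmetric polynomial evaluated at the elements of a
finite set `S ⊆ ℂ`. -/
def hsymFinset (S : Finset ℂ) (k : ℕ) : ℂ :=
  ∑ d ∈ Finset.Nat.antidiagonalTuple S.card k, ∏ i, (S.equivFin.symm i).1 ^ d i

/-- The `k`-th elementary symmetric function of the elements of a finite set `T ⊆ ℂ`. -/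
def esymFinset (T : Finset ℂ) (k : ℕ) : ℂ :=
  ∑ s ∈ T.powersetCard k, ∏ z ∈ s, z

open Finset

namespace Polynomial

theorem prod_one_sub_C_mul_X_nthRootsFinset {R : Type*} [CommRing R] [IsDomain R]
    [Infinite R] {m : ℕ} {ζ : R} (hm : 0 < m) (hζ : IsPrimitiveRoot ζ m) :
    ∏ z ∈ nthRootsFinset m (1 : R), (1 - C z * X) = 1 - X ^ m :=
  Polynomial.funext fun x => by
    simpa [eval_prod] using (hζ.pow_sub_pow_eq_prod_sub_mul 1 x hm).symm

end Polynomial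

namespace PowerSeries

variable {R : Type*} [CommRing R]

open Polynomial in
theorem prod_one_sub_C_mul_X_nthRootsFinset [IsDomain R] [Infinite R] {m : ℕ} {ζ : R}
    (hm : 0 < m) (hζ : IsPrimitiveRoot ζ m) :
    ∏ z ∈ nthRootsFinset m (1 : R), (1 - C z * X) = 1 - X ^ m := by
  simpa [map_prod] using congrArg Polynomial.coeToPowerSeries.ringHom
    (Polynomial.prod_one_sub_C_mul_X_nthRootsFinset hm hζ)

theorem coeff_prod_one_sub_C_mul_X (T : Finset R) (k : ℕ) :
    coeff k (∏ z ∈ T, (1 - C z * X)) =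
      (-1) ^ k * ∑ s ∈ T.powersetCard k, ∏ z ∈ s, z := by
  simp_rw [sub_eq_add_neg, ← neg_mul, ← map_neg, prod_one_add, prod_mul_distrib, ← map_prod,
    prod_const, map_sum, coeff_C_mul_X_pow, ← sum_filter, powersetCard_eq_filter, mul_sum]
  refine sum_congr (by simp [eq_comm]) fun s hs => ?_
  rw [prod_neg, (mem_filter.1 hs).2]

theorem mk_pow_mul_one_sub_C_mul_X (z : R) : mk (z ^ ·) * (1 - C z * X) = 1 := by
  simpa [rescale_mk, rescale_X] using congrArg (rescale z) (mk_one_mul_one_sub_eq_one (S := R))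

theorem coeff_prod_mk_pow {n : ℕ} (f : Fin n → R) (k : ℕ) :
    coeff k (∏ i, mk (f i ^ ·)) = ∑ d ∈ Nat.antidiagonalTuple n k, ∏ i, f i ^ d i := by
  rw [coeff_prod, ← piAntidiag_univ_fin_eq_antidiagonalTuple]
  simp only [finsuppAntidiag, sum_map, coeff_mk]
  exact sum_attach _ fun d : Fin n → ℕ => ∏ i, f i ^ d i

theorem coeff_one_sub_X_pow_mul_of_lt {m k : ℕ} (f : R⟦X⟧) (hk : k < m) :
    coeff k ((1 - X ^ m) * f) = coeff k f := by
  rw [sub_mul, one_mul, map_sub, coeff_X_pow_mul', if_neg (by omega), sub_zero]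

end PowerSeries

theorem hsymFinset_eq_coeff (S : Finset ℂ) (k : ℕ) :
    hsymFinset S k = PowerSeries.coeff k (∏ z ∈ S, PowerSeries.mk (z ^ ·)) := by
  rw [← prod_coe_sort, ← S.equivFin.symm.prod_comp, PowerSeries.coeff_prod_mk_pow, hsymFinset]

open PowerSeries in
theorem stmt_16_general (m : ℕ) (S : Finset ℂ)
    (hS : S ⊆ Polynomial.nthRootsFinset m (1 : ℂ)) (hne : S.Nonempty)
    (j : ℕ) (hj2 : j ≤ m - S.card) :
    hsymFinset S j = (-1 : ℂ) ^ j * esymFinset (Polynomial.nthRootsFinset m (1 : ℂ) \ S) j := by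
  obtain ⟨z₀, hz₀⟩ := hne
  have hm : 0 < m := Nat.pos_of_ne_zero fun h => by simpa [h] using hS hz₀
  have hjm : j < m := by have := card_pos.2 ⟨z₀, hz₀⟩; omega
  set T := Polynomial.nthRootsFinset m (1 : ℂ) \ S
  set G : ℂ⟦X⟧ := ∏ z ∈ S, mk (z ^ ·)
  have hsplit : (∏ z ∈ S, (1 - C z * X)) * ∏ z ∈ T, (1 - C z * X) = 1 - X ^ m := by
    rw [← prod_union disjoint_sdiff, union_sdiff_of_subset hS,
      prod_one_sub_C_mul_X_nthRootsFinset hm (Complex.isPrimitiveRoot_exp m hm.ne')]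
  have hinv : G * ∏ z ∈ S, (1 - C z * X) = 1 := by
    rw [← prod_mul_distrib]
    exact prod_eq_one fun z _ => mk_pow_mul_one_sub_C_mul_X z
  have hT : ∏ z ∈ T, (1 - C z * X) = (1 - X ^ m) * G := by
    linear_combination G * hsplit - (∏ z ∈ T, (1 - C z * X)) * hinv
  calc hsymFinset S j = coeff j G := hsymFinset_eq_coeff S j
    _ = coeff j ((1 - X ^ m) * G) := (coeff_one_sub_X_pow_mul_of_lt G hjm).symm
    _ = (-1) ^ j * esymFinset T j := by rw [← hT, coeff_prod_one_sub_C_mul_X, esymFinset]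

/-- Let `S` be a nonempty proper subset of the `m`-th roots of unity in `ℂ`, `n = |S|`, and
`S^c` its complement among the `m`-th roots of unity.  Then for `1 ≤ j ≤ m - n`,
`h_j(S) = (-1)^j · σ_j(S^c)`. -/
theorem stmt_16 (m : ℕ) (hm : 2 ≤ m) (S : Finset ℂ)
    (hS : S ⊆ Polynomial.nthRootsFinset m (1 : ℂ)) (hne : S.Nonempty)
    (hproper : S ≠ Polynomial.nthRootsFinset m (1 : ℂ))
    (j : ℕ) (hj1 : 1 ≤ j) (hj2 : j ≤ m - S.card) :
    hsymFinset S j = (-1 : ℂ) ^ j * esymFinset (Polynomial.nthRootsFinset m (1 : ℂ) \ S) j :=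
  stmt_16_general m S hS hne j hj2
end
end
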